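/- Let g:X→ℝ³ be a C¹ cooperative vector field on an open convex set X⊆ℝ³ (all off-diagonal entries of the Jacobian are nonnegative), and let ζ,ξ:[0,a]→X solve ζ'=g(ζ), ξ'=g(ξ). If ζ(0) ≤ ξ(0) componentwise, then ζ(t) ≤ ξ(t) componentwise for all t∈[0,a]. -/

import Mathlib

/-! The function `φ t = ‖(ζ t - ξ t)⁺‖ = maxᵢ (ζ t i - ξ t i)⁺` vanishes at `0`. At a time `t`
where the maximum is attained at the coordinate `i`, the mean value theorem on the segment
`[ξ t, ζ t] ⊆ X` and cooperativity give `gᵢ(ζ t) - gᵢ(ξ t) ≤ C φ t`, where `C` bounds `‖Dg‖` on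
the compact union of these segments. Hence the right Dini derivative of `φ` is at most `C φ`,
and Gronwall's inequality forces `φ = 0`. -/

open Set Filter Topology

section

variable {ι : Type*} [Fintype ι]

lemma apply_le_norm_mul_of_cooperative [DecidableEq ι] (A : (ι → ℝ) →L[ℝ] ℝ) {i : ι}
    (hA : ∀ j, j ≠ i → 0 ≤ A (Pi.single j 1)) {v : ι → ℝ}
    (hv : ∀ j, v j ≤ v i) (hvi : 0 ≤ v i) : A v ≤ ‖A‖ * v i := by
  -- `v - v i • 1` is `≤ 0` and vanishes at `i`, so only the nonnegative off-diagonal entries act.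
  set w : ι → ℝ := v - fun _ => v i
  have hw : A w ≤ 0 := by
    rw [← Finset.univ_sum_single w, map_sum]
    refine Finset.sum_nonpos fun j _ => ?_
    rcases eq_or_ne j i with rfl | hj
    · simp [w]
    · rw [← mul_one (w j), ← smul_eq_mul, Pi.single_smul', map_smul, smul_eq_mul]
      exact mul_nonpos_of_nonpos_of_nonneg (sub_nonpos.2 (hv j)) (hA j hj)
  have hconst : A (fun _ => v i) ≤ ‖A‖ * v i :=
    calc A (fun _ => v i) ≤ ‖A‖ * ‖fun _ : ι => v i‖ := (le_abs_self _).trans (A.le_opNorm _)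
      _ ≤ ‖A‖ * v i := by
        gcongr
        exact (pi_norm_const_le _).trans (Real.norm_of_nonneg hvi).le
  have hsplit : A v = A w + A (fun _ => v i) := by rw [← map_add, sub_add_cancel]
  linarith

lemma norm_fderiv_apply_le {E : Type*} [NormedAddCommGroup E] [NormedSpace ℝ E]
    {g : E → ι → ℝ} {z : E} (hg : DifferentiableAt ℝ g z) (i : ι) :
    ‖fderiv ℝ (fun y => g y i) z‖ ≤ ‖fderiv ℝ g z‖ := by
  rw [(hasFDerivAt_pi'.1 hg.hasFDerivAt i).fderiv]
  exact ContinuousLinearMap.opNorm_le_bound _ (norm_nonneg _) fun v =>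
    (norm_le_pi_norm (fderiv ℝ g z v) i).trans ((fderiv ℝ g z).le_opNorm v)

lemma apply_le_norm_posPart (v : ι → ℝ) (i : ι) : v i ≤ ‖v⁺‖ :=
  calc v i ≤ v⁺ i := le_max_left _ _
    _ ≤ ‖v⁺ i‖ := Real.le_norm_self _
    _ ≤ ‖v⁺‖ := norm_le_pi_norm _ i

lemma eventually_slope_norm_posPart_lt {f : ℝ → ι → ℝ} {f' : ι → ℝ} {x r : ℝ}
    (hf : HasDerivAt f f' x) (hr : 0 < r) (hf' : ∀ i, f x i = ‖(f x)⁺‖ → f' i < r) :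
    ∀ᶠ z in 𝓝[>] x, slope (fun t => ‖(f t)⁺‖) x z < r := by
  set M := ‖(f x)⁺‖
  have hcomp : ∀ i, ∀ᶠ z in 𝓝[>] x, f z i < M + (z - x) * r := by
    intro i
    have hfi : HasDerivAt (fun t => f t i) (f' i) x := hasDerivAt_pi.1 hf i
    rcases (apply_le_norm_posPart (f x) i).lt_or_eq with hlt | heq
    · filter_upwards [(hfi.continuousAt.eventually_lt_const hlt).filter_mono nhdsWithin_le_nhds,
        self_mem_nhdsWithin] with z hz (hxz : x < z)
      nlinarith [sub_pos.2 hxz]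
    · filter_upwards [hfi.hasDerivWithinAt.limsup_slope_le' (lt_irrefl x) (hf' i heq),
        self_mem_nhdsWithin] with z hz (hxz : x < z)
      rw [slope_def_field, div_lt_iff₀ (sub_pos.2 hxz)] at hz
      linarith
  filter_upwards [eventually_all.2 hcomp, self_mem_nhdsWithin] with z hz (hxz : x < z)
  have hxz' : 0 < z - x := sub_pos.2 hxz
  have hbound : 0 < M + (z - x) * r := by positivity
  have hnorm : ‖(f z)⁺‖ < M + (z - x) * r := by
    refine (pi_norm_lt_iff hbound).2 fun i => ?_
    rw [posPart_def, Pi.sup_apply, Pi.zero_apply, Real.norm_of_nonneg le_sup_right]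
    exact max_lt (hz i) hbound
  rw [slope_def_field, div_lt_iff₀ hxz']
  linarith

lemma sub_apply_le_of_cooperative [DecidableEq ι] {X : Set (ι → ℝ)} {g : (ι → ℝ) → ι → ℝ}
    (hg : ∀ z ∈ X, DifferentiableAt ℝ g z)
    (hcoop : ∀ z ∈ X, ∀ i j, i ≠ j → 0 ≤ fderiv ℝ (fun y => g y i) z (Pi.single j 1))
    {x y : ι → ℝ} {C : ℝ} (hseg : segment ℝ y x ⊆ X)
    (hC : ∀ z ∈ segment ℝ y x, ‖fderiv ℝ g z‖ ≤ C) {i : ι} (hi : (x - y) i = ‖(x - y)⁺‖) :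
    g x i - g y i ≤ C * ‖(x - y)⁺‖ := by
  obtain ⟨z, hz, hmvt⟩ := domain_mvt (f := fun w => g w i)
    (fun z hz => (differentiableAt_pi.1 (hg z (hseg hz)) i).hasFDerivAt.hasFDerivWithinAt)
    (convex_segment y x) (left_mem_segment ℝ y x) (right_mem_segment ℝ y x)
  have hpos : 0 ≤ (x - y) i := (norm_nonneg _).trans_eq hi.symm
  rw [hmvt, ← hi]
  calc fderiv ℝ (fun w => g w i) z (x - y) ≤ ‖fderiv ℝ (fun w => g w i) z‖ * (x - y) i :=
        apply_le_norm_mul_of_cooperative _ (fun j hj => hcoop z (hseg hz) i j hj.symm)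
          (fun j => (apply_le_norm_posPart _ j).trans hi.ge) hpos
    _ ≤ C * (x - y) i := by
        gcongr
        exact (norm_fderiv_apply_le (hg z (hseg hz)) i).trans (hC z hz)

end

lemma IsCompact.exists_bound_on_segments {α E F : Type*} [TopologicalSpace α]
    [NormedAddCommGroup E] [NormedSpace ℝ E] [SeminormedAddCommGroup F]
    {T : Set α} (hT : IsCompact T) {u v : α → E} (hu : ContinuousOn u T) (hv : ContinuousOn v T)
    {X : Set E} (hX : ∀ t ∈ T, segment ℝ (u t) (v t) ⊆ X) {G : E → F} (hG : ContinuousOn G X) :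
    ∃ C, 0 ≤ C ∧ ∀ t ∈ T, ∀ z ∈ segment ℝ (u t) (v t), ‖G z‖ ≤ C := by
  set K := (fun p : ℝ × α => u p.2 + p.1 • (v p.2 - u p.2)) '' (Icc 0 1 ×ˢ T)
  have hK : IsCompact K := (isCompact_Icc.prod hT).image_of_continuousOn <|
    (hu.comp continuousOn_snd fun p hp => hp.2).add <| continuousOn_fst.smul <|
      (hv.comp continuousOn_snd fun p hp => hp.2).sub (hu.comp continuousOn_snd fun p hp => hp.2)
  have hseg : ∀ t ∈ T, segment ℝ (u t) (v t) ⊆ K := by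
    intro t ht z hz
    rw [segment_eq_image'] at hz
    obtain ⟨s, hs, rfl⟩ := hz
    exact ⟨(s, t), ⟨hs, ht⟩, rfl⟩
  have hKX : K ⊆ X := by
    rintro _ ⟨⟨s, t⟩, ⟨hs, ht⟩, rfl⟩
    exact hX t ht (by rw [segment_eq_image']; exact ⟨s, hs, rfl⟩)
  obtain ⟨C, hC⟩ := hK.exists_bound_of_continuousOn (hG.mono hKX)
  exact ⟨max C 0, le_max_right _ _, fun t ht z hz => (hC z (hseg t ht hz)).trans (le_max_left _ _)⟩

theorem stmt12_general (X : Set (Fin 3 → ℝ)) (g : (Fin 3 → ℝ) → (Fin 3 → ℝ)) (a : ℝ)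
    (ζ ξ : ℝ → Fin 3 → ℝ)
    (hX : IsOpen X) (hconv : Convex ℝ X)
    (hg : ContDiffOn ℝ 1 g X)
    (hcoop : ∀ x ∈ X, ∀ i j : Fin 3, i ≠ j →
      0 ≤ fderiv ℝ (fun y => g y i) x (Pi.single j 1))
    (hζX : ∀ t ∈ Icc (0 : ℝ) a, ζ t ∈ X)
    (hξX : ∀ t ∈ Icc (0 : ℝ) a, ξ t ∈ X)
    (hζ : ∀ t ∈ Icc (0 : ℝ) a, HasDerivAt ζ (g (ζ t)) t)
    (hξ : ∀ t ∈ Icc (0 : ℝ) a, HasDerivAt ξ (g (ξ t)) t)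
    (h0 : ∀ i, ζ 0 i ≤ ξ 0 i) :
    ∀ t ∈ Icc (0 : ℝ) a, ∀ i, ζ t i ≤ ξ t i := by
  have hseg : ∀ t ∈ Icc 0 a, segment ℝ (ξ t) (ζ t) ⊆ X := fun t ht =>
    hconv.segment_subset (hξX t ht) (hζX t ht)
  have hζc : ContinuousOn ζ (Icc 0 a) := fun t ht => (hζ t ht).continuousAt.continuousWithinAt
  have hξc : ContinuousOn ξ (Icc 0 a) := fun t ht => (hξ t ht).continuousAt.continuousWithinAt
  have hgd : ∀ z ∈ X, DifferentiableAt ℝ g z := fun z hz =>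
    (hg.differentiableOn one_ne_zero).differentiableAt (hX.mem_nhds hz)
  obtain ⟨C, hC0, hC⟩ := isCompact_Icc.exists_bound_on_segments hξc hζc hseg
    (hg.continuousOn_fderiv_of_isOpen hX le_rfl)
  have hdini : ∀ t ∈ Ico 0 a, ∀ r, C * ‖(ζ t - ξ t)⁺‖ < r →
      ∃ᶠ z in 𝓝[>] t, (z - t)⁻¹ * (‖(ζ z - ξ z)⁺‖ - ‖(ζ t - ξ t)⁺‖) < r := by
    intro t ht r hr
    replace ht := Ico_subset_Icc_self ht
    refine (eventually_slope_norm_posPart_lt ((hζ t ht).sub (hξ t ht))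
      ((mul_nonneg hC0 (norm_nonneg _)).trans_lt hr) fun i hi => ?_).frequently
    exact (sub_apply_le_of_cooperative hgd hcoop (hseg t ht) (hC t ht) hi).trans_lt hr
  have hφ : ∀ t ∈ Icc 0 a, ‖(ζ t - ξ t)⁺‖ ≤ gronwallBound 0 C 0 (t - 0) :=
    le_gronwallBound_of_liminf_deriv_right_le
      (continuousOn_pi.2 fun i =>
        ((continuous_apply i).comp_continuousOn (hζc.sub hξc)).sup continuousOn_const).norm
      hdini (norm_le_zero_iff.2 (posPart_eq_zero.2 (sub_nonpos.2 h0))) fun _ _ => (add_zero _).ge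
  intro t ht
  have hφt := hφ t ht
  rwa [gronwallBound_ε0_δ0, norm_le_zero_iff, posPart_eq_zero, sub_nonpos] at hφt

theorem stmt12 (X : Set (Fin 3 → ℝ)) (g : (Fin 3 → ℝ) → (Fin 3 → ℝ)) (a : ℝ)
    (ζ ξ : ℝ → Fin 3 → ℝ)
    (hX : IsOpen X) (hconv : Convex ℝ X)
    (hg : ContDiffOn ℝ 1 g X)
    (hcoop : ∀ x ∈ X, ∀ i j : Fin 3, i ≠ j →
      0 ≤ fderiv ℝ (fun y => g y i) x (Pi.single j 1))
    (ha : 0 < a)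
    (hζX : ∀ t ∈ Icc (0 : ℝ) a, ζ t ∈ X)
    (hξX : ∀ t ∈ Icc (0 : ℝ) a, ξ t ∈ X)
    (hζ : ∀ t ∈ Icc (0 : ℝ) a, HasDerivAt ζ (g (ζ t)) t)
    (hξ : ∀ t ∈ Icc (0 : ℝ) a, HasDerivAt ξ (g (ξ t)) t)
    (h0 : ∀ i, ζ 0 i ≤ ξ 0 i) :
    ∀ t ∈ Icc (0 : ℝ) a, ∀ i, ζ t i ≤ ξ t i :=
  stmt12_general X g a ζ ξ hX hconv hg hcoop hζX hξX hζ hξ h0
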